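/- arXiv:1211.6263 — 5 statements merged into one kernel-verified Lean document; each statement's English description precedes it below -/
import Mathlib

section
/- If a matrix filter A satisfies the full rank condition ∑_j A(2j) = ∑_j A(2j+1) = I and (A,B) is a matrix QMF system, then the coefficients of B sum to the zero matrix: ∑_j B(j) = 0. -/
/-!
Summing the relations `∑_j A(j)ᵀ B(j - 2k) = 0` over all `k` and exchanging the two finite sums,
the inner sum `∑_k B(j - 2k)` depends only on the parity of `j`: it is `Bₑ = ∑_k B(2k)` for even
`j` and `Bₒ = ∑_k B(2k + 1)` for odd `j`. Hence `0 = (∑_j A(2j))ᵀ Bₑ + (∑_j A(2j + 1))ᵀ Bₒ`,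
which by the full rank condition is `Bₑ + Bₒ = ∑_j B(j)`.
-/

open Function Matrix

section

variable {α β M : Type*} [AddCommMonoid M]

theorem finsum_comm_of_hasFiniteSupport (f : α → β → M) (hf : (uncurry f).HasFiniteSupport) :
    ∑ᶠ a, ∑ᶠ b, f a b = ∑ᶠ b, ∑ᶠ a, f a b := by
  have hf' : (uncurry f ∘ Prod.swap).HasFiniteSupport := hf.comp_of_injective Prod.swap_injective
  calc ∑ᶠ a, ∑ᶠ b, f a b = ∑ᶠ p, uncurry f p := (finsum_curry _ hf).symm
    _ = ∑ᶠ q, (uncurry f ∘ Prod.swap) q := (finsum_comp_equiv (Equiv.prodComm β α)).symm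
    _ = ∑ᶠ b, ∑ᶠ a, f a b := finsum_curry _ hf'

end

section

variable {M : Type*} [AddCommMonoid M]

theorem finsum_int_eq_finsum_even_add_finsum_odd (f : ℤ → M) (hf : f.HasFiniteSupport) :
    ∑ᶠ j, f j = ∑ᶠ j, f (2 * j) + ∑ᶠ j, f (2 * j + 1) := by
  have hunion : Set.range (2 * · : ℤ → ℤ) ∪ Set.range (2 * · + 1 : ℤ → ℤ) = Set.univ := by
    ext j
    simp only [Set.mem_union, Set.mem_range, Set.mem_univ, iff_true]
    rcases Int.emod_two_eq_zero_or_one j with h | h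
    exacts [.inl ⟨j / 2, by omega⟩, .inr ⟨j / 2, by omega⟩]
  have hdisj : Disjoint (Set.range (2 * · : ℤ → ℤ)) (Set.range (2 * · + 1 : ℤ → ℤ)) := by
    rw [Set.disjoint_left]
    rintro _ ⟨i, rfl⟩ ⟨j, hj⟩
    simp only at hj
    omega
  rw [← finsum_mem_univ, ← hunion, finsum_mem_union' hdisj (hf.subset Set.inter_subset_right)
    (hf.subset Set.inter_subset_right), finsum_mem_range (by intro i j h; simpa using h),
    finsum_mem_range (by intro i j h; simpa using h)]

theorem finsum_comp_sub_two_mul (g : ℤ → M) (j : ℤ) :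
    ∑ᶠ k, g (j - 2 * k) = ∑ᶠ k, g (2 * k + j % 2) := by
  rw [← finsum_comp_equiv (Equiv.subLeft (j / 2))]
  congr 1
  ext k
  simp only [Equiv.subLeft_apply]
  congr 1
  omega

end

section

variable {R : Type*} [NonUnitalNonAssocSemiring R]

theorem finsum_finsum_mul_comp_sub_two_mul {a b : ℤ → R} (ha : a.HasFiniteSupport)
    (hb : b.HasFiniteSupport) :
    ∑ᶠ k, ∑ᶠ j, a j * b (j - 2 * k) = ∑ᶠ j, a j * ∑ᶠ k, b (j - 2 * k) := by
  have hsupp : (uncurry fun k j => a j * b (j - 2 * k)).HasFiniteSupport := by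
    refine ((ha.prod hb).image fun p : ℤ × ℤ => ((p.1 - p.2) / 2, p.1)).subset ?_
    rintro ⟨k, j⟩ hkj
    refine ⟨(j, j - 2 * k), ⟨left_ne_zero_of_mul hkj, right_ne_zero_of_mul hkj⟩, ?_⟩
    simp only [Prod.mk.injEq, and_true]
    omega
  rw [finsum_comm_of_hasFiniteSupport _ hsupp]
  refine finsum_congr fun j => (mul_finsum' _ _ ?_).symm
  exact hb.comp_of_injective fun k l h => by simpa using h

theorem finsum_finsum_mul_comp_sub_two_mul_eq_add {a b : ℤ → R} (ha : a.HasFiniteSupport)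
    (hb : b.HasFiniteSupport) :
    ∑ᶠ k, ∑ᶠ j, a j * b (j - 2 * k) =
      (∑ᶠ j, a (2 * j)) * ∑ᶠ k, b (2 * k) + (∑ᶠ j, a (2 * j + 1)) * ∑ᶠ k, b (2 * k + 1) := by
  have h0 : ∀ j : ℤ, 2 * j % 2 = 0 := by omega
  have h1 : ∀ j : ℤ, (2 * j + 1) % 2 = 1 := by omega
  rw [finsum_finsum_mul_comp_sub_two_mul ha hb,
    finsum_int_eq_finsum_even_add_finsum_odd _ (ha.fun_mul_left _)]
  simp only [finsum_comp_sub_two_mul b, h0, h1, add_zero]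
  rw [finsum_mul' _ _ (ha.fun_comp_of_injective fun i j h => by simpa using h),
    finsum_mul' _ _ (ha.fun_comp_of_injective fun i j h => by simpa using h)]

end

theorem qmf_full_rank_wavelet_sum_zero_general (d : ℕ)
    (A B : ℤ → Matrix (Fin d) (Fin d) ℝ)
    (hAfin : (Function.support A).Finite)
    (hBfin : (Function.support B).Finite)
    (hQMF_AB : ∀ k : ℤ, (∑ᶠ j : ℤ, (A j)ᵀ * B (j - 2*k)) = 0)
    (hFR0 : (∑ᶠ j : ℤ, A (2*j)) = 1)
    (hFR1 : (∑ᶠ j : ℤ, A (2*j + 1)) = 1) :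
    (∑ᶠ j : ℤ, B j) = 0 := by
  have hAT : (fun j => (A j)ᵀ).HasFiniteSupport := by
    simpa [HasFiniteSupport, support] using hAfin
  have htranspose (f : ℤ → Matrix (Fin d) (Fin d) ℝ) : ∑ᶠ j, (f j)ᵀ = (∑ᶠ j, f j)ᵀ :=
    ((transposeAddEquiv _ _ ℝ).map_finsum f).symm
  have hpoly := finsum_finsum_mul_comp_sub_two_mul_eq_add hAT hBfin
  rw [finsum_congr hQMF_AB, finsum_zero, htranspose, htranspose, hFR0, hFR1, transpose_one,
    one_mul, one_mul, ← finsum_int_eq_finsum_even_add_finsum_odd B hBfin] at hpoly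
  exact hpoly.symm

theorem qmf_full_rank_wavelet_sum_zero (d : ℕ)
    (A B : ℤ → Matrix (Fin d) (Fin d) ℝ)
    (hAfin : (Function.support A).Finite)
    (hBfin : (Function.support B).Finite)
    (hQMF_A : ∀ k : ℤ, (∑ᶠ j : ℤ, (A j)ᵀ * A (j - 2*k)) =
      (if k = 0 then (2:ℝ) • (1 : Matrix (Fin d) (Fin d) ℝ) else 0))
    (hQMF_B : ∀ k : ℤ, (∑ᶠ j : ℤ, (B j)ᵀ * B (j - 2*k)) =
      (if k = 0 then (2:ℝ) • (1 : Matrix (Fin d) (Fin d) ℝ) else 0))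
    (hQMF_AB : ∀ k : ℤ, (∑ᶠ j : ℤ, (A j)ᵀ * B (j - 2*k)) = 0)
    (hFR0 : (∑ᶠ j : ℤ, A (2*j)) = 1)
    (hFR1 : (∑ᶠ j : ℤ, A (2*j + 1)) = 1) :
    (∑ᶠ j : ℤ, B j) = 0 :=
  qmf_full_rank_wavelet_sum_zero_general d A B hAfin hBfin hQMF_AB hFR0 hFR1
end

section
/- For any a ∈ [-1,1], the symbol A(z) = (z+1)·[[a²z+(1-a²), (1-z)a√(1-a²)],[z(1-z)a√(1-a²), (1-a²)z²+a²z]] has autocorrelation C(z) = (1/2)·A(1/z)ᵀA(z) = ((z+1)²/(2z))·I₂ for all z ≠ 0. -/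
/-!
Up to the scalar `z + 1`, the symbol is `F_E(z) F_P(z)`, where `F_Q(z) = 1 + (z - 1) Q` and
`E`, `P` are the orthogonal projections onto the unit vectors `(0, 1)` and `(a, -√(1 - a²))`.
For a symmetric idempotent `Q` the map `z ↦ F_Q(z)` is multiplicative with symmetric values, so
`F_Q(z⁻¹)ᵀ F_Q(z) = F_Q(1) = 1`; this paraunitarity passes to products, and the scalar factor
contributes `(z⁻¹ + 1)(z + 1) / 2 = (z + 1)² / (2z)`.
-/

open Matrix

section ElementaryFactor

variable {n R : Type*} [DecidableEq n] [CommRing R]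

def elementaryFactor (Q : Matrix n n R) (z : R) : Matrix n n R := 1 + (z - 1) • Q

theorem elementaryFactor_mul_elementaryFactor [Fintype n] {Q : Matrix n n R}
    (hQ : IsIdempotentElem Q) (u v : R) :
    elementaryFactor Q u * elementaryFactor Q v = elementaryFactor Q (u * v) := by
  simp only [elementaryFactor, add_mul, mul_add, one_mul, mul_one, smul_mul_smul_comm, hQ.eq]
  module

theorem elementaryFactor_one (Q : Matrix n n R) : elementaryFactor Q 1 = 1 := by
  simp [elementaryFactor]

theorem transpose_elementaryFactor {Q : Matrix n n R} (hQ : Qᵀ = Q) (z : R) :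
    (elementaryFactor Q z)ᵀ = elementaryFactor Q z := by
  simp [elementaryFactor, hQ]

end ElementaryFactor

theorem isIdempotentElem_vecMulVec_self {n R : Type*} [Fintype n] [CommRing R] {v : n → R}
    (hv : v ⬝ᵥ v = 1) : IsIdempotentElem (vecMulVec v v) := by
  rw [IsIdempotentElem, vecMulVec_mul_vecMulVec, hv, one_smul]

section Paraunitary

variable {n K : Type*} [Fintype n] [DecidableEq n] [Field K]

def IsParaunitary (M : K → Matrix n n K) : Prop := ∀ z ≠ 0, (M z⁻¹)ᵀ * M z = 1

theorem IsParaunitary.mul {M N : K → Matrix n n K} (hM : IsParaunitary M)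
    (hN : IsParaunitary N) : IsParaunitary fun z => M z * N z := by
  intro z hz
  rw [transpose_mul, Matrix.mul_assoc, ← Matrix.mul_assoc (M z⁻¹)ᵀ, hM z hz, Matrix.one_mul,
    hN z hz]

theorem isParaunitary_elementaryFactor {Q : Matrix n n K} (hQ : IsIdempotentElem Q)
    (hQt : Qᵀ = Q) : IsParaunitary (elementaryFactor Q) := by
  intro z hz
  rw [transpose_elementaryFactor hQt, elementaryFactor_mul_elementaryFactor hQ,
    inv_mul_cancel₀ hz, elementaryFactor_one]

theorem isParaunitary_elementaryFactor_vecMulVec_self {v : n → K} (hv : v ⬝ᵥ v = 1) :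
    IsParaunitary (elementaryFactor (vecMulVec v v)) :=
  isParaunitary_elementaryFactor (isIdempotentElem_vecMulVec_self hv) (transpose_vecMulVec v v)

end Paraunitary

theorem symbol_eq_elementaryFactor_mul {R : Type*} [CommRing R] {a b : R}
    (hb : b ^ 2 = 1 - a ^ 2) (z : R) :
    !![a^2*z + (1-a^2), (1-z)*a*b; z*(1-z)*a*b, (1-a^2)*z^2 + a^2*z] =
      elementaryFactor (vecMulVec ![0, 1] ![0, 1]) z *
        elementaryFactor (vecMulVec ![a, -b] ![a, -b]) z := by
  ext i j
  fin_cases i <;> fin_cases j <;> simp [elementaryFactor, mul_apply, Fin.sum_univ_two]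
  · ring
  · ring
  · ring
  · linear_combination (z - z ^ 2) * hb

theorem one_parameter_family_autocorrelation (a : ℝ) (ha : a ∈ Set.Icc (-1:ℝ) 1) :
    letI A : ℝ → Matrix (Fin 2) (Fin 2) ℝ := fun z =>
      (z+1) • !![a^2*z + (1-a^2), (1-z)*a*Real.sqrt (1-a^2);
                 z*(1-z)*a*Real.sqrt (1-a^2), (1-a^2)*z^2 + a^2*z]
    ∀ z : ℝ, z ≠ 0 →
      (1/2 : ℝ) • ((A (1/z))ᵀ * A z) =
        ((z+1)^2 / (2*z)) • (1 : Matrix (Fin 2) (Fin 2) ℝ) := by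
  intro z hz
  set b := Real.sqrt (1 - a^2)
  have hb : b ^ 2 = 1 - a^2 := Real.sq_sqrt (by nlinarith [ha.1, ha.2])
  have hv : ![a, -b] ⬝ᵥ ![a, -b] = 1 := by
    simp only [dotProduct, Fin.sum_univ_two, cons_val_zero, cons_val_one]
    linear_combination hb
  have hM := (isParaunitary_elementaryFactor_vecMulVec_self (v := ![0, (1 : ℝ)]) (by simp)).mul
    (isParaunitary_elementaryFactor_vecMulVec_self hv) z hz
  simp only [one_div, symbol_eq_elementaryFactor_mul hb, transpose_smul, smul_mul_smul_comm, hM,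
    smul_smul]
  congr 1
  field_simp
  ring
end

section
/- For any a, b ∈ [-1,1], the two-parameter symbol A(z) = (z+1)·[[b²z²+(1-a²-b²)z+a², (1-z)(b√(1-b²)z+a√(1-a²))],[(1-z)(a√(1-a²)z+b√(1-b²)), a²z²+(1-a²-b²)z+b²]] together with B(z) = P·A(-z)·P, where P = diag(1,-1), satisfies the QMF polyphase condition L(1/z)ᵀL(z) = 2I₄ and the full rank condition A(1) = 2I₂, A(-1) = 0. -/
open Matrix

/-- The subsymbol `Aₗ(z) = ∑ₖ A(2k+l) zᵏ` of a finitely supported matrix filter. -/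
noncomputable def subsymbol {d : ℕ} (A : ℤ → Matrix (Fin d) (Fin d) ℝ) (l : ℤ) (z : ℝ) :
    Matrix (Fin d) (Fin d) ℝ :=
  ∑ᶠ k : ℤ, z ^ k • A (2*k + l)

/-- The polyphase matrix `L(z) = [[A₀(z), B₀(z)], [A₁(z), B₁(z)]]`. -/
noncomputable def polyphase {d : ℕ} (A B : ℤ → Matrix (Fin d) (Fin d) ℝ) (z : ℝ) :
    Matrix (Fin d ⊕ Fin d) (Fin d ⊕ Fin d) ℝ :=
  Matrix.fromBlocks (subsymbol A 0 z) (subsymbol B 0 z) (subsymbol A 1 z) (subsymbol B 1 z)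

/-- The symbol of the two-parameter family. -/
noncomputable def twoParamSymbol (a b : ℝ) (z : ℝ) : Matrix (Fin 2) (Fin 2) ℝ :=
  (z+1) • !![b^2*z^2 + (1-a^2-b^2)*z + a^2,
             (1-z)*(b*Real.sqrt (1-b^2)*z + a*Real.sqrt (1-a^2));
             (1-z)*(a*Real.sqrt (1-a^2)*z + b*Real.sqrt (1-b^2)),
             a^2*z^2 + (1-a^2-b^2)*z + b^2]

lemma laurent_zero {c : ℤ → ℝ} (hc : (Function.support c).Finite)
    (h : ∀ z : ℝ, z ≠ 0 → ∑ᶠ k : ℤ, z ^ k * c k = 0) : ∀ k, c k = 0 := by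
  classical
  set S := hc.toFinset with hS
  obtain ⟨N, hN⟩ : ∃ N : ℕ, ∀ k ∈ S, 0 ≤ k + N := by
    rcases S.eq_empty_or_nonempty with he | hne
    · exact ⟨0, by simp [he]⟩
    · refine ⟨(S.min' hne).natAbs, fun k hk => ?_⟩
      have := S.min'_le k hk
      omega
  set p : Polynomial ℝ := ∑ k ∈ S, Polynomial.C (c k) * Polynomial.X ^ (k + N).toNat with hp
  have heval : ∀ z : ℝ, z ≠ 0 → p.eval z = 0 := by
    intro z hz
    have h1 : ∑ᶠ k : ℤ, z ^ k * c k = ∑ k ∈ S, z ^ k * c k := by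
      apply finsum_eq_sum_of_support_subset
      intro k hk
      simp only [Function.mem_support] at hk
      have hck : c k ≠ 0 := fun h0 => hk (by simp [h0])
      simpa [hS] using hck
    have h2 := h z hz
    rw [h1] at h2
    have key : p.eval z = z ^ N * ∑ k ∈ S, z ^ k * c k := by
      rw [hp]
      simp only [Polynomial.eval_finset_sum, Polynomial.eval_mul, Polynomial.eval_C,
        Polynomial.eval_pow, Polynomial.eval_X]
      rw [Finset.mul_sum]
      refine Finset.sum_congr rfl fun k hk => ?_
      have hk0 : (0:ℤ) ≤ k + N := hN k hk
      have e1 : z ^ ((k + N).toNat) = z ^ (k + (N:ℤ)) := by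
        rw [← zpow_natCast, Int.toNat_of_nonneg hk0]
      rw [e1, zpow_add₀ hz, zpow_natCast]
      ring
    rw [key, h2, mul_zero]
  have hp0 : p = 0 := by
    apply Polynomial.eq_zero_of_infinite_isRoot
    apply Set.Infinite.mono (s := ({0}ᶜ : Set ℝ))
    · intro x hx
      exact heval x (by simpa using hx)
    · exact (Set.finite_singleton (0:ℝ)).infinite_compl
  intro k
  by_cases hk : k ∈ S
  · have hco := congrArg (fun q => Polynomial.coeff q (k + N).toNat) hp0
    simp only [hp, Polynomial.finset_sum_coeff, Polynomial.coeff_C_mul,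
      Polynomial.coeff_X_pow, Polynomial.coeff_zero] at hco
    rw [Finset.sum_eq_single k] at hco
    · simpa using hco
    · intro j hj hjk
      have h1 := hN j hj
      have h2 := hN k hk
      have : (k + N).toNat ≠ (j + N).toNat := by omega
      simp [this]
    · intro hks; exact absurd hk hks
  · have : k ∉ Function.support c := by simpa [hS] using hk
    simpa using this

lemma filter_eq {A C : ℤ → Matrix (Fin 2) (Fin 2) ℝ}
    (hA : (Function.support A).Finite) (hC : (Function.support C).Finite)
    (h : ∀ z : ℝ, z ≠ 0 → (∑ᶠ k : ℤ, z ^ k • A k) = ∑ᶠ k : ℤ, z ^ k • C k) : A = C := by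
  classical
  set T := (hA.union hC).toFinset with hT
  have hsubA : ∀ z : ℝ, (∑ᶠ k : ℤ, z ^ k • A k) = ∑ k ∈ T, z ^ k • A k := by
    intro z
    apply finsum_eq_sum_of_support_subset
    intro k hk
    simp only [Function.mem_support] at hk
    have : A k ≠ 0 := fun h0 => hk (by simp [h0])
    simp [hT, Function.mem_support, this]
  have hsubC : ∀ z : ℝ, (∑ᶠ k : ℤ, z ^ k • C k) = ∑ k ∈ T, z ^ k • C k := by
    intro z
    apply finsum_eq_sum_of_support_subset
    intro k hk
    simp only [Function.mem_support] at hk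
    have : C k ≠ 0 := fun h0 => hk (by simp [h0])
    simp [hT, Function.mem_support, this]
  funext k
  ext i j
  have key : ∀ m : ℤ, (fun m => A m i j - C m i j) m = 0 := by
    apply laurent_zero
    · apply (hA.union hC).subset
      intro x hx
      simp only [Function.mem_support] at hx
      by_contra hc
      simp only [Set.mem_union, Function.mem_support, not_or, not_not] at hc
      apply hx
      rw [hc.1, hc.2]
      simp
    · intro z hz
      have h2 := h z hz
      rw [hsubA, hsubC] at h2
      have h3 := congrArg (fun M => M i j) h2
      simp only [Matrix.sum_apply, Matrix.smul_apply, smul_eq_mul] at h3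
      have h4 : ∑ᶠ m : ℤ, z ^ m * (A m i j - C m i j)
          = ∑ m ∈ T, z ^ m * (A m i j - C m i j) := by
        apply finsum_eq_sum_of_support_subset
        intro x hx
        simp only [Function.mem_support] at hx
        have : ¬ (A x = 0 ∧ C x = 0) := by
          rintro ⟨h1', h2'⟩
          apply hx
          rw [h1', h2']
          simp
        simp only [hT, Set.Finite.coe_toFinset, Set.mem_union, Function.mem_support]
        by_contra hc
        simp only [not_or, not_not] at hc
        exact this ⟨hc.1, hc.2⟩
      rw [h4]
      have : ∑ m ∈ T, z ^ m * (A m i j - C m i j)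
          = (∑ m ∈ T, z ^ m * A m i j) - ∑ m ∈ T, z ^ m * C m i j := by
        rw [← Finset.sum_sub_distrib]
        exact Finset.sum_congr rfl fun m _ => by ring
      rw [this, h3, sub_self]
  have := key k
  simpa [sub_eq_zero] using this

/-- Explicit coefficients of the symbol `A`. -/
noncomputable def coefA (a b : ℝ) : ℤ → Matrix (Fin 2) (Fin 2) ℝ := fun k =>
  let s := Real.sqrt (1-a^2); let t := Real.sqrt (1-b^2)
  if k = 0 then !![a^2, a*s; b*t, b^2]
  else if k = 1 then !![1-b^2, b*t; a*s, 1-a^2]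
  else if k = 2 then !![1-a^2, -(a*s); -(b*t), 1-b^2]
  else if k = 3 then !![b^2, -(b*t); -(a*s), a^2]
  else 0

/-- Explicit coefficients of the symbol `B`. -/
noncomputable def coefB (a b : ℝ) : ℤ → Matrix (Fin 2) (Fin 2) ℝ := fun k =>
  let s := Real.sqrt (1-a^2); let t := Real.sqrt (1-b^2)
  if k = 0 then !![a^2, -(a*s); -(b*t), b^2]
  else if k = 1 then !![-(1-b^2), b*t; a*s, -(1-a^2)]
  else if k = 2 then !![1-a^2, a*s; b*t, 1-b^2]
  else if k = 3 then !![-b^2, -(b*t); -(a*s), -a^2]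
  else 0

lemma coefA_support (a b : ℝ) : Function.support (coefA a b) ⊆ ↑({0,1,2,3} : Finset ℤ) := by
  intro k hk
  simp only [Function.mem_support, coefA] at hk
  simp only [Finset.coe_insert, Set.mem_insert_iff, Finset.coe_singleton, Set.mem_singleton_iff]
  by_contra hc
  push_neg at hc
  obtain ⟨h0, h1, h2, h3⟩ := hc
  simp [h0, h1, h2, h3] at hk

lemma coefB_support (a b : ℝ) : Function.support (coefB a b) ⊆ ↑({0,1,2,3} : Finset ℤ) := by
  intro k hk
  simp only [Function.mem_support, coefB] at hk
  simp only [Finset.coe_insert, Set.mem_insert_iff, Finset.coe_singleton, Set.mem_singleton_iff]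
  by_contra hc
  push_neg at hc
  obtain ⟨h0, h1, h2, h3⟩ := hc
  simp [h0, h1, h2, h3] at hk

lemma coefA_fin (a b : ℝ) : (Function.support (coefA a b)).Finite :=
  Set.Finite.subset ({0,1,2,3} : Finset ℤ).finite_toSet (coefA_support a b)

lemma coefB_fin (a b : ℝ) : (Function.support (coefB a b)).Finite :=
  Set.Finite.subset ({0,1,2,3} : Finset ℤ).finite_toSet (coefB_support a b)

lemma symbol_four {C : ℤ → Matrix (Fin 2) (Fin 2) ℝ}
    (hC : Function.support C ⊆ ↑({0,1,2,3} : Finset ℤ)) (z : ℝ) :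
    (∑ᶠ k : ℤ, z ^ k • C k) = C 0 + z • C 1 + z^2 • C 2 + z^3 • C 3 := by
  rw [finsum_eq_sum_of_support_subset _ (s := ({0,1,2,3} : Finset ℤ))]
  · rw [show ({0,1,2,3} : Finset ℤ) = {0,1,2,3} from rfl]
    rw [Finset.sum_insert (by decide), Finset.sum_insert (by decide),
      Finset.sum_insert (by decide), Finset.sum_singleton]
    norm_num [zpow_ofNat]
    abel
  · intro k hk
    simp only [Function.mem_support] at hk
    have : C k ≠ 0 := fun h0 => hk (by simp [h0])
    exact hC this

lemma coefA_symbol (a b : ℝ) (z : ℝ) :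
    (∑ᶠ k : ℤ, z ^ k • coefA a b k) = twoParamSymbol a b z := by
  rw [symbol_four (coefA_support a b)]
  ext i j
  fin_cases i <;> fin_cases j <;>
    simp [coefA, twoParamSymbol, Matrix.smul_apply] <;> ring

lemma coefB_symbol (a b : ℝ) (z : ℝ) :
    (∑ᶠ k : ℤ, z ^ k • coefB a b k) =
      !![1, 0; 0, -1] * twoParamSymbol a b (-z) * !![1, 0; 0, -1] := by
  rw [symbol_four (coefB_support a b)]
  ext i j
  fin_cases i <;> fin_cases j <;>
    simp [coefB, twoParamSymbol, Matrix.mul_apply, Fin.sum_univ_two, Matrix.smul_apply] <;> ring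

lemma subsymbol_explicit (C : ℤ → Matrix (Fin 2) (Fin 2) ℝ)
    (hC : Function.support C ⊆ ↑({0,1,2,3} : Finset ℤ)) (l : ℤ) (hl : l = 0 ∨ l = 1) (z : ℝ) :
    subsymbol C l z = C l + z • C (2 + l) := by
  rw [subsymbol, finsum_eq_sum_of_support_subset _ (s := ({0,1} : Finset ℤ))]
  · rw [Finset.sum_insert (by decide), Finset.sum_singleton]
    rcases hl with rfl | rfl <;> norm_num
  · intro k hk
    simp only [Function.mem_support] at hk
    have h1 : C (2*k+l) ≠ 0 := fun h0 => hk (by simp [h0])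
    have h2 := hC h1
    simp only [Finset.coe_insert, Set.mem_insert_iff, Finset.coe_singleton,
      Set.mem_singleton_iff] at h2 ⊢
    rcases hl with rfl | rfl <;> omega


lemma t2 (p q r u : ℝ) : (!![p,q;r,u])ᵀ = !![p,r;q,u] := by
  ext i j; fin_cases i <;> fin_cases j <;> rfl

section Blocks
variable (a b s t : ℝ)

noncomputable def mA0 : Matrix (Fin 2) (Fin 2) ℝ := !![a^2, a*s; b*t, b^2]
noncomputable def mA1 : Matrix (Fin 2) (Fin 2) ℝ := !![1-b^2, b*t; a*s, 1-a^2]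
noncomputable def mA2 : Matrix (Fin 2) (Fin 2) ℝ := !![1-a^2, -(a*s); -(b*t), 1-b^2]
noncomputable def mA3 : Matrix (Fin 2) (Fin 2) ℝ := !![b^2, -(b*t); -(a*s), a^2]
noncomputable def mB0 : Matrix (Fin 2) (Fin 2) ℝ := !![a^2, -(a*s); -(b*t), b^2]
noncomputable def mB1 : Matrix (Fin 2) (Fin 2) ℝ := !![-(1-b^2), b*t; a*s, -(1-a^2)]
noncomputable def mB2 : Matrix (Fin 2) (Fin 2) ℝ := !![1-a^2, a*s; b*t, 1-b^2]
noncomputable def mB3 : Matrix (Fin 2) (Fin 2) ℝ := !![-b^2, -(b*t); -(a*s), -a^2]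

set_option maxHeartbeats 2000000 in
lemma block11 {z : ℝ} (hz : z ≠ 0) (hs : s^2 = 1-a^2) (ht : t^2 = 1-b^2) :
    (mA0 a b s t + (1/z) • mA2 a b s t)ᵀ * (mA0 a b s t + z • mA2 a b s t)
      + (mA1 a b s t + (1/z) • mA3 a b s t)ᵀ * (mA1 a b s t + z • mA3 a b s t)
      = (2:ℝ) • (1 : Matrix (Fin 2) (Fin 2) ℝ) := by
  rw [Matrix.transpose_add, Matrix.transpose_smul, Matrix.transpose_add, Matrix.transpose_smul]
  simp only [mA0, mA1, mA2, mA3, t2]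
  ext i j
  fin_cases i <;> fin_cases j <;>
    simp [Matrix.mul_apply, Fin.sum_univ_two, Matrix.one_apply, Matrix.add_apply,
      Matrix.smul_apply] <;>
    field_simp <;> ring_nf <;> simp only [hs, ht] <;> ring
set_option maxHeartbeats 2000000 in
lemma block12 {z : ℝ} (hz : z ≠ 0) (hs : s^2 = 1-a^2) (ht : t^2 = 1-b^2) :
    (mA0 a b s t + (1/z) • mA2 a b s t)ᵀ * (mB0 a b s t + z • mB2 a b s t)
      + (mA1 a b s t + (1/z) • mA3 a b s t)ᵀ * (mB1 a b s t + z • mB3 a b s t)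
      = (0 : Matrix (Fin 2) (Fin 2) ℝ) := by
  rw [Matrix.transpose_add, Matrix.transpose_smul, Matrix.transpose_add, Matrix.transpose_smul]
  simp only [mA0, mA1, mA2, mA3, mB0, mB1, mB2, mB3, t2]
  ext i j
  fin_cases i <;> fin_cases j <;>
    simp [Matrix.mul_apply, Fin.sum_univ_two, Matrix.one_apply, Matrix.add_apply,
      Matrix.smul_apply] <;>
    field_simp <;> ring_nf <;> simp only [hs, ht] <;> ring
set_option maxHeartbeats 2000000 in
lemma block21 {z : ℝ} (hz : z ≠ 0) (hs : s^2 = 1-a^2) (ht : t^2 = 1-b^2) :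
    (mB0 a b s t + (1/z) • mB2 a b s t)ᵀ * (mA0 a b s t + z • mA2 a b s t)
      + (mB1 a b s t + (1/z) • mB3 a b s t)ᵀ * (mA1 a b s t + z • mA3 a b s t)
      = (0 : Matrix (Fin 2) (Fin 2) ℝ) := by
  rw [Matrix.transpose_add, Matrix.transpose_smul, Matrix.transpose_add, Matrix.transpose_smul]
  simp only [mA0, mA1, mA2, mA3, mB0, mB1, mB2, mB3, t2]
  ext i j
  fin_cases i <;> fin_cases j <;>
    simp [Matrix.mul_apply, Fin.sum_univ_two, Matrix.one_apply, Matrix.add_apply,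
      Matrix.smul_apply] <;>
    field_simp <;> ring_nf <;> simp only [hs, ht] <;> ring
set_option maxHeartbeats 2000000 in
lemma block22 {z : ℝ} (hz : z ≠ 0) (hs : s^2 = 1-a^2) (ht : t^2 = 1-b^2) :
    (mB0 a b s t + (1/z) • mB2 a b s t)ᵀ * (mB0 a b s t + z • mB2 a b s t)
      + (mB1 a b s t + (1/z) • mB3 a b s t)ᵀ * (mB1 a b s t + z • mB3 a b s t)
      = (2:ℝ) • (1 : Matrix (Fin 2) (Fin 2) ℝ) := by
  rw [Matrix.transpose_add, Matrix.transpose_smul, Matrix.transpose_add, Matrix.transpose_smul]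
  simp only [mA0, mA1, mA2, mA3, mB0, mB1, mB2, mB3, t2]
  ext i j
  fin_cases i <;> fin_cases j <;>
    simp [Matrix.mul_apply, Fin.sum_univ_two, Matrix.one_apply, Matrix.add_apply,
      Matrix.smul_apply] <;>
    field_simp <;> ring_nf <;> simp only [hs, ht] <;> ring
end Blocks


set_option maxHeartbeats 1000000 in
theorem two_parameter_family_qmf_and_full_rank (a b : ℝ)
    (ha : a ∈ Set.Icc (-1:ℝ) 1) (hb : b ∈ Set.Icc (-1:ℝ) 1)
    (A B : ℤ → Matrix (Fin 2) (Fin 2) ℝ)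
    (hAfin : (Function.support A).Finite)
    (hBfin : (Function.support B).Finite)
    (hAsym : ∀ z : ℝ, z ≠ 0 → (∑ᶠ k : ℤ, z ^ k • A k) = twoParamSymbol a b z)
    (hBsym : ∀ z : ℝ, z ≠ 0 → (∑ᶠ k : ℤ, z ^ k • B k) =
      !![1, 0; 0, -1] * twoParamSymbol a b (-z) * !![1, 0; 0, -1]) :
    (∀ z : ℝ, z ≠ 0 →
      (polyphase A B (1/z))ᵀ * polyphase A B z =
        (2:ℝ) • (1 : Matrix (Fin 2 ⊕ Fin 2) (Fin 2 ⊕ Fin 2) ℝ)) ∧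
    twoParamSymbol a b 1 = (2:ℝ) • (1 : Matrix (Fin 2) (Fin 2) ℝ) ∧
    twoParamSymbol a b (-1) = 0 := by
  obtain ⟨ha1, ha2⟩ := ha
  obtain ⟨hb1, hb2⟩ := hb
  have hs : Real.sqrt (1-a^2) ^ 2 = 1 - a^2 := Real.sq_sqrt (by nlinarith)
  have ht : Real.sqrt (1-b^2) ^ 2 = 1 - b^2 := Real.sq_sqrt (by nlinarith)
  have hA : A = coefA a b := filter_eq hAfin (coefA_fin a b)
    (fun z hz => by rw [hAsym z hz, coefA_symbol])
  have hB : B = coefB a b := filter_eq hBfin (coefB_fin a b)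
    (fun z hz => by rw [hBsym z hz, coefB_symbol])
  refine ⟨?_, ?_, ?_⟩
  · intro z hz
    rw [hA, hB]
    unfold polyphase
    have sA0 : ∀ w : ℝ, subsymbol (coefA a b) 0 w
        = mA0 a b (Real.sqrt (1-a^2)) (Real.sqrt (1-b^2))
          + w • mA2 a b (Real.sqrt (1-a^2)) (Real.sqrt (1-b^2)) := by
      intro w
      rw [subsymbol_explicit _ (coefA_support a b) 0 (Or.inl rfl)]
      norm_num [coefA, mA0, mA2]
    have sA1 : ∀ w : ℝ, subsymbol (coefA a b) 1 w
        = mA1 a b (Real.sqrt (1-a^2)) (Real.sqrt (1-b^2))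
          + w • mA3 a b (Real.sqrt (1-a^2)) (Real.sqrt (1-b^2)) := by
      intro w
      rw [subsymbol_explicit _ (coefA_support a b) 1 (Or.inr rfl)]
      norm_num [coefA, mA1, mA3]
    have sB0 : ∀ w : ℝ, subsymbol (coefB a b) 0 w
        = mB0 a b (Real.sqrt (1-a^2)) (Real.sqrt (1-b^2))
          + w • mB2 a b (Real.sqrt (1-a^2)) (Real.sqrt (1-b^2)) := by
      intro w
      rw [subsymbol_explicit _ (coefB_support a b) 0 (Or.inl rfl)]
      norm_num [coefB, mB0, mB2]
    have sB1 : ∀ w : ℝ, subsymbol (coefB a b) 1 w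
        = mB1 a b (Real.sqrt (1-a^2)) (Real.sqrt (1-b^2))
          + w • mB3 a b (Real.sqrt (1-a^2)) (Real.sqrt (1-b^2)) := by
      intro w
      rw [subsymbol_explicit _ (coefB_support a b) 1 (Or.inr rfl)]
      norm_num [coefB, mB1, mB3]
    rw [sA0, sA0, sA1, sA1, sB0, sB0, sB1, sB1]
    rw [Matrix.fromBlocks_transpose, Matrix.fromBlocks_multiply]
    rw [show (2:ℝ) • (1 : Matrix (Fin 2 ⊕ Fin 2) (Fin 2 ⊕ Fin 2) ℝ)
        = Matrix.fromBlocks ((2:ℝ) • 1) 0 0 ((2:ℝ) • 1) by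
      rw [← Matrix.fromBlocks_one, Matrix.fromBlocks_smul, smul_zero]]
    rw [Matrix.fromBlocks_inj]
    exact ⟨block11 a b _ _ hz hs ht, block12 a b _ _ hz hs ht,
      block21 a b _ _ hz hs ht, block22 a b _ _ hz hs ht⟩
  · ext i j
    fin_cases i <;> fin_cases j <;> simp [twoParamSymbol, Matrix.one_apply] <;> ring
  · ext i j
    fin_cases i <;> fin_cases j <;> simp [twoParamSymbol] <;> ring
end

section
/- If U ∈ SO(2) and V ∈ SO(2), and M = [[U,0],[0,V]], M' = [[Vᵀ,0],[0,Uᵀ]] (block-diagonal 4×4 matrices), then applying the operator L(z) ↦ [[0,zI],[I,0]]·M'·[[0,I],[z⁻¹I,0]]·M·L(z) to the Haar polyphase matrix H(z) = [[I,I],[I,-I]] (with I the 2×2 identity) returns H(z) itself. -/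
open Matrix

theorem block_diagonal_rotations_fix_haar
    (U V : Matrix (Fin 2) (Fin 2) ℝ)
    (hU : Uᵀ * U = 1) (hUdet : U.det = 1)
    (hV : Vᵀ * V = 1) (hVdet : V.det = 1) :
    letI M : Matrix (Fin 2 ⊕ Fin 2) (Fin 2 ⊕ Fin 2) ℝ := Matrix.fromBlocks U 0 0 V
    letI M' : Matrix (Fin 2 ⊕ Fin 2) (Fin 2 ⊕ Fin 2) ℝ := Matrix.fromBlocks Vᵀ 0 0 Uᵀ
    letI H : Matrix (Fin 2 ⊕ Fin 2) (Fin 2 ⊕ Fin 2) ℝ := Matrix.fromBlocks 1 1 1 (-1)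
    ∀ z : ℝ, z ≠ 0 →
      Matrix.fromBlocks 0 (z • (1 : Matrix (Fin 2) (Fin 2) ℝ)) 1 0 * M' *
        Matrix.fromBlocks 0 1 (z⁻¹ • (1 : Matrix (Fin 2) (Fin 2) ℝ)) 0 * M * H = H := by
  intro z hz
  simp [Matrix.fromBlocks_multiply, Matrix.smul_mul, Matrix.mul_smul, smul_smul,
    mul_inv_cancel₀ hz, inv_mul_cancel₀ hz, hU, hV]
end

section
/- For any angle ζ, setting a = sin ζ, the scalar Laurent polynomial p(z) = (z+1)·((a² - a√(1-a²))z + 1 - 2a² + (a² + a√(1-a²))z⁻¹) satisfies p(1/z)·p(z) + q(1/z)·q(z) = 4 for all z ≠ 0, where q(z) = (1-z)·((a² + a√(1-a²))z + 2a² - 1 + (a² - a√(1-a²))z⁻¹); moreover p(1) = 2 and p(-1) = 0. -/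
theorem diagonal_family_scalar_qmf (ζ : ℝ) :
    letI a : ℝ := Real.sin ζ
    letI p : ℝ → ℝ := fun z =>
      (z+1) * ((a^2 - a*Real.sqrt (1-a^2))*z + 1 - 2*a^2 + (a^2 + a*Real.sqrt (1-a^2))*z⁻¹)
    letI q : ℝ → ℝ := fun z =>
      (1-z) * ((a^2 + a*Real.sqrt (1-a^2))*z + 2*a^2 - 1 + (a^2 - a*Real.sqrt (1-a^2))*z⁻¹)
    (∀ z : ℝ, z ≠ 0 → p (1/z) * p z + q (1/z) * q z = 4) ∧ p 1 = 2 ∧ p (-1) = 0 := by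
  set a : ℝ := Real.sin ζ with ha
  set s : ℝ := Real.sqrt (1-a^2) with hsdef
  have hs : s ^ 2 = 1 - a^2 := by
    rw [hsdef, Real.sq_sqrt]
    nlinarith [Real.sin_sq_le_one ζ]
  refine ⟨fun z hz => ?_, ?_, ?_⟩
  · simp only []
    field_simp
    linear_combination (-4*a^2*z + 8*a^2*z^3 - 4*a^2*z^5) * hs
  · norm_num; ring
  · norm_num
end
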